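/- Suppose λ > 0. Let (T, Y) be a mild solution of the wildfire system on [0, t*] with initial data T_0 ∈ L²(ℝ^d) ∩ L^∞(ℝ^d), Y_0 ∈ L^∞(ℝ^d), Y_0 ≥ 0, and with T(·,t) ∈ L²(ℝ^d) ∩ L^∞(ℝ^d) continuously in t. Then there exists an absolute constant C ≥ 1 such that for all t ∈ [0, t*]: ‖T(·,t)‖_{L²(ℝ^d)}² ≤ C ‖T_0‖_{L²(ℝ^d)}² · exp((C ‖Y_0‖_{L^∞(ℝ^d)} − λ) t). -/

import Mathlib

open MeasureTheory Real Set Filter ENNReal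

noncomputable section

/-- Euclidean space `ℝ^d`. -/
abbrev Rd (d : ℕ) := EuclideanSpace ℝ (Fin d)

/-- The Arrhenius reaction rate: `r(T) = exp(-1/T)` for `T > 0`, `0` otherwise. -/
noncomputable def rrate (T : ℝ) : ℝ := if 0 < T then Real.exp (-1 / T) else 0

/-- The heat semigroup `e^{tΔ}φ`, given by convolution with the heat kernel
`Φ_t(x) = (4πt)^{-d/2} exp(-|x|²/(4t))` for `t ≠ 0`, and the identity at `t = 0`. -/
noncomputable def heatConv (d : ℕ) (t : ℝ) (φ : Rd d → ℝ) : Rd d → ℝ :=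
  if t = 0 then φ
  else fun x => ∫ y : Rd d,
    (4 * Real.pi * t) ^ (-(d : ℝ) / 2) * Real.exp (-‖x - y‖ ^ 2 / (4 * t)) * φ y

/-- The Duhamel representative of the temperature at time `t`:
`e^{-λt} e^{tΔ} T₀ + ∫₀ᵗ e^{-λ(t-τ)} e^{(t-τ)Δ}[Y(·,τ) r(T(·,τ))] dτ`. -/
noncomputable def duhamelRep (d : ℕ) (lam : ℝ) (T0 : Rd d → ℝ)
    (T Y : Rd d → ℝ → ℝ) (t : ℝ) (x : Rd d) : ℝ :=
  Real.exp (-lam * t) * heatConv d t T0 x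
    + ∫ τ in Set.Ioc (0 : ℝ) t,
        Real.exp (-lam * (t - τ)) *
          heatConv d (t - τ) (fun y => Y y τ * rrate (T y τ)) x

/-- Continuity of the curve `t ↦ T(·,t)` into `L^p(ℝ^d)`, on the time set `I`. -/
def ContinuousIntoLp (d : ℕ) (p : ℝ≥0∞) (I : Set ℝ) (T : Rd d → ℝ → ℝ) : Prop :=
  ∀ t₀ ∈ I, Filter.Tendsto (fun t => eLpNorm (fun x => T x t - T x t₀) p volume)
    (nhdsWithin t₀ I) (nhds 0)

/-- A mild solution `(T, Y)` of the wildfire reaction-diffusion system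
`T_t = (Δ - λ)T + Y r(T)`, `Y_t = -β Y r(T)` with data `(T₀, Y₀)`, on the time set `I`:
the temperature satisfies the Duhamel formula (a.e. in `x`) and the fuel satisfies
`Y(x,t) = Y₀(x) exp(-β ∫₀ᵗ r(T(x,σ)) dσ)`, with both curves continuous into `L^∞`. -/
structure IsMildSolutionOn (d : ℕ) (lam beta : ℝ) (I : Set ℝ)
    (T0 Y0 : Rd d → ℝ) (T Y : Rd d → ℝ → ℝ) : Prop where
  meas_T0 : Measurable T0
  meas_Y0 : Measurable Y0
  bdd_T0 : eLpNorm T0 ⊤ volume < ⊤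
  bdd_Y0 : eLpNorm Y0 ⊤ volume < ⊤
  meas_T : ∀ t ∈ I, Measurable fun x => T x t
  meas_Y : ∀ t ∈ I, Measurable fun x => Y x t
  cont_T : ContinuousIntoLp d ⊤ I T
  cont_Y : ContinuousIntoLp d ⊤ I Y
  duhamel : ∀ t ∈ I, (fun x => T x t) =ᵐ[volume] duhamelRep d lam T0 T Y t
  fuel : ∀ x, ∀ t ∈ I,
    Y x t = Y0 x * Real.exp (-beta * ∫ σ in Set.Ioc (0 : ℝ) t, rrate (T x σ))

/-- The `X_{t*}`-norm: `sup_{t ∈ I} [(1+t)^{d/2} ‖T(·,t)‖_{L^∞} + ‖T(·,t)‖_{L¹}]`. -/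
noncomputable def XnormOn (d : ℕ) (I : Set ℝ) (T : Rd d → ℝ → ℝ) : ℝ≥0∞ :=
  ⨆ t ∈ I, (ENNReal.ofReal ((1 + t) ^ ((d : ℝ) / 2)) * eLpNorm (fun x => T x t) ⊤ volume
    + eLpNorm (fun x => T x t) 1 volume)


/-!
The temperature obeys the Duhamel formula. The heat semigroup is an `L²` contraction, and the
reaction term is bounded in `L²` by `‖Y₀‖_∞ ‖T(·,τ)‖₂`, since `0 ≤ Y ≤ Y₀` and `r(T) ≤ |T|`.
Minkowski's integral inequality, applied to the Duhamel integral after replacing `T` and `Y` by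
jointly measurable versions (which exist because both are continuous into `L^∞`), gives
`u(t) ≤ e^{-λt} ‖T₀‖₂ + ∫₀ᵗ e^{-λ(t-τ)} ‖Y₀‖_∞ u(τ) dτ` for `u(t) = ‖T(·,t)‖₂`. Grönwall's
inequality then yields `u(t) ≤ ‖T₀‖₂ e^{(‖Y₀‖_∞ - λ)t}`, and squaring gives the estimate with
`C = 2`, because `2(‖Y₀‖_∞ - λ) ≤ 2‖Y₀‖_∞ - λ`.
-/

open TopologicalSpace Topology

section Minkowski

variable {α β : Type*} [MeasurableSpace α] [MeasurableSpace β] {μ : Measure α} {ν : Measure β}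

theorem lintegral_mul_le_eLpNorm_two_mul_eLpNorm_two {f g : α → ℝ≥0∞}
    (hf : AEMeasurable f μ) (hg : AEMeasurable g μ) :
    ∫⁻ x, f x * g x ∂μ ≤ eLpNorm f 2 μ * eLpNorm g 2 μ := by
  have h := ENNReal.lintegral_mul_le_Lp_mul_Lq μ Real.HolderConjugate.two_two hf hg
  simp only [eLpNorm_eq_lintegral_rpow_enorm_toReal two_ne_zero ofNat_ne_top, enorm_eq_self,
    toReal_ofNat]
  exact h

theorem measurable_eLpNorm_two_of_measurable_uncurry [SFinite μ] {G : α → β → ℝ≥0∞}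
    (hG : Measurable (Function.uncurry G)) : Measurable fun y => eLpNorm (G · y) 2 μ := by
  simp only [eLpNorm_eq_lintegral_rpow_enorm_toReal two_ne_zero ofNat_ne_top, enorm_eq_self]
  exact (Measurable.lintegral_prod_left (by fun_prop)).pow_const _

/-- Minkowski's integral inequality in `L²`: after squaring, it is Cauchy–Schwarz in `x` for each
pair `(y, y')`. -/
theorem eLpNorm_two_lintegral_le [SFinite μ] [SFinite ν] {G : α → β → ℝ≥0∞}
    (hG : Measurable (Function.uncurry G)) :
    eLpNorm (fun x => ∫⁻ y, G x y ∂ν) 2 μ ≤ ∫⁻ y, eLpNorm (G · y) 2 μ ∂ν := by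
  have hsq : ∀ f : α → ℝ≥0∞, eLpNorm f 2 μ ^ 2 = ∫⁻ x, f x ^ 2 ∂μ := fun f => by
    simpa using eLpNorm_nnreal_pow_eq_lintegral (f := f) (μ := μ) (p := 2) two_ne_zero
  have hGx : ∀ x, Measurable (G x) := fun x => hG.comp measurable_prodMk_left
  have hGy : ∀ y, Measurable (G · y) := fun y => hG.comp measurable_prodMk_right
  have hA := (measurable_eLpNorm_two_of_measurable_uncurry (μ := μ) hG).aemeasurable (μ := ν)
  rw [← ENNReal.pow_le_pow_left_iff two_ne_zero, hsq]
  calc ∫⁻ x, (∫⁻ y, G x y ∂ν) ^ 2 ∂μ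
      = ∫⁻ x, ∫⁻ w, G x w.1 * G x w.2 ∂ν.prod ν ∂μ := by
        simp_rw [sq, lintegral_prod_mul (hGx _).aemeasurable (hGx _).aemeasurable]
    _ = ∫⁻ w, ∫⁻ x, G x w.1 * G x w.2 ∂μ ∂ν.prod ν := lintegral_lintegral_swap (by fun_prop)
    _ ≤ ∫⁻ w, eLpNorm (G · w.1) 2 μ * eLpNorm (G · w.2) 2 μ ∂ν.prod ν := lintegral_mono fun w =>
        lintegral_mul_le_eLpNorm_two_mul_eLpNorm_two (hGy _).aemeasurable (hGy _).aemeasurable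
    _ = (∫⁻ y, eLpNorm (G · y) 2 μ ∂ν) ^ 2 := by rw [lintegral_prod_mul hA hA, sq]

theorem eLpNorm_two_integral_le [SFinite μ] [SFinite ν] {E : Type*}
    [NormedAddCommGroup E] [NormedSpace ℝ E] {F : α → β → E}
    (hF : StronglyMeasurable (Function.uncurry F)) :
    eLpNorm (fun x => ∫ y, F x y ∂ν) 2 μ ≤ ∫⁻ y, eLpNorm (F · y) 2 μ ∂ν :=
  calc eLpNorm (fun x => ∫ y, F x y ∂ν) 2 μ
      ≤ eLpNorm (fun x => ∫⁻ y, ‖F x y‖ₑ ∂ν) 2 μ :=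
        eLpNorm_mono_enorm fun x =>
          (enorm_integral_le_lintegral_enorm _).trans_eq (enorm_eq_self _).symm
    _ ≤ ∫⁻ y, eLpNorm (fun x => ‖F x y‖ₑ) 2 μ ∂ν := eLpNorm_two_lintegral_le hF.enorm
    _ = ∫⁻ y, eLpNorm (F · y) 2 μ ∂ν := by simp_rw [eLpNorm_enorm]

end Minkowski

section Convolution

variable {G : Type*} [MeasurableSpace G] [AddCommGroup G] [MeasurableAdd₂ G] [MeasurableNeg G]
  {μ : Measure G} [SFinite μ] [μ.IsAddLeftInvariant] [μ.IsAddRightInvariant] [μ.IsNegInvariant]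

theorem eLpNorm_two_integral_mul_sub_le {k φ : G → ℝ} (hk : Measurable k) (hφ : Measurable φ) :
    eLpNorm (fun x => ∫ y, k (x - y) * φ y ∂μ) 2 μ ≤ (∫⁻ z, ‖k z‖ₑ ∂μ) * eLpNorm φ 2 μ := by
  have hswap : ∀ x, ∫ y, k (x - y) * φ y ∂μ = ∫ z, k z * φ (x - z) ∂μ := fun x => by
    simpa using (integral_sub_left_eq_self (fun y => k (x - y) * φ y) μ x).symm
  have htranslate : ∀ z, eLpNorm (fun x => k z * φ (x - z)) 2 μ = ‖k z‖ₑ * eLpNorm φ 2 μ :=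
    fun z => by
      rw [show (fun x => k z * φ (x - z)) = k z • (φ ∘ (· - z)) from rfl, eLpNorm_const_smul,
        eLpNorm_comp_measurePreserving hφ.aestronglyMeasurable (measurePreserving_sub_right μ z)]
  calc eLpNorm (fun x => ∫ y, k (x - y) * φ y ∂μ) 2 μ
      = eLpNorm (fun x => ∫ z, k z * φ (x - z) ∂μ) 2 μ := by simp_rw [hswap]
    _ ≤ ∫⁻ z, eLpNorm (fun x => k z * φ (x - z)) 2 μ ∂μ :=
        eLpNorm_two_integral_le (by fun_prop)
    _ = (∫⁻ z, ‖k z‖ₑ ∂μ) * eLpNorm φ 2 μ := by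
        simp_rw [htranslate]
        exact lintegral_mul_const _ hk.enorm

end Convolution

section HeatSemigroup

variable {d : ℕ}

def heatKernel (d : ℕ) (t : ℝ) (z : Rd d) : ℝ :=
  (4 * π * t) ^ (-(d : ℝ) / 2) * exp (-‖z‖ ^ 2 / (4 * t))

theorem heatConv_of_ne_zero {t : ℝ} (ht : t ≠ 0) (φ : Rd d → ℝ) :
    heatConv d t φ = fun x => ∫ y, heatKernel d t (x - y) * φ y := by
  rw [heatConv, if_neg ht]
  rfl

theorem heatConv_congr_ae {t : ℝ} (ht : t ≠ 0) {φ ψ : Rd d → ℝ} (h : φ =ᵐ[volume] ψ) :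
    heatConv d t φ = heatConv d t ψ := by
  rw [heatConv_of_ne_zero ht, heatConv_of_ne_zero ht]
  ext x
  exact integral_congr_ae (h.mono fun y hy => by simp only [hy])

theorem integral_heatKernel {t : ℝ} (ht : 0 < t) : ∫ z, heatKernel d t z = 1 := by
  have hb : 0 < 1 / (4 * t) := by positivity
  have hk : heatKernel d t =
      fun z => (4 * π * t) ^ (-(d : ℝ) / 2) * exp (-(1 / (4 * t)) * ‖z‖ ^ 2) := by
    ext z
    rw [heatKernel]
    congr 2
    ring
  have hπ : π / (1 / (4 * t)) = 4 * π * t := by field_simp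
  rw [hk, integral_const_mul, GaussianFourier.integral_rexp_neg_mul_sq_norm hb,
    finrank_euclideanSpace_fin, hπ, ← rpow_add (by positivity), neg_div, neg_add_cancel,
    Real.rpow_zero]

theorem lintegral_enorm_heatKernel {t : ℝ} (ht : 0 < t) : ∫⁻ z, ‖heatKernel d t z‖ₑ = 1 := by
  have hnonneg : 0 ≤ heatKernel d t := fun z => by unfold heatKernel; positivity
  rw [lintegral_enorm_of_nonneg hnonneg, ← ofReal_integral_eq_lintegral_ofReal
    (Integrable.of_integral_ne_zero (by simp [integral_heatKernel ht]))
    (Eventually.of_forall hnonneg), integral_heatKernel ht, ofReal_one]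

theorem eLpNorm_heatConv_le {t : ℝ} (ht : 0 ≤ t) {φ : Rd d → ℝ} (hφ : Measurable φ) :
    eLpNorm (heatConv d t φ) 2 volume ≤ eLpNorm φ 2 volume := by
  rcases ht.eq_or_lt with rfl | ht
  · simp [heatConv]
  rw [heatConv_of_ne_zero ht.ne']
  calc _ ≤ (∫⁻ z, ‖heatKernel d t z‖ₑ) * eLpNorm φ 2 volume :=
        eLpNorm_two_integral_mul_sub_le (by unfold heatKernel; fun_prop) hφ
    _ = eLpNorm φ 2 volume := by rw [lintegral_enorm_heatKernel ht, one_mul]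

theorem measurable_heatConv {ι : Type*} [MeasurableSpace ι] {s : ι → ℝ} (hs : Measurable s)
    {φ : ι × Rd d → ℝ} (hφ : Measurable φ) :
    Measurable fun p : Rd d × ι => heatConv d (s p.2) (fun y => φ (p.2, y)) p.1 := by
  simp only [heatConv, ite_apply]
  refine Measurable.ite (measurableSet_eq_fun (hs.comp measurable_snd) measurable_const)
    (hφ.comp (measurable_snd.prodMk measurable_fst)) ?_
  exact (StronglyMeasurable.integral_prod_right' (f := fun q : (Rd d × ι) × Rd d =>
    (4 * π * s q.1.2) ^ (-(d : ℝ) / 2) * exp (-‖q.1.1 - q.2‖ ^ 2 / (4 * s q.1.2)) * φ (q.1.2, q.2))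
    (by fun_prop)).measurable

theorem Measurable.heatConv {φ : Rd d → ℝ} (hφ : Measurable φ) (t : ℝ) :
    Measurable (heatConv d t φ) :=
  (measurable_heatConv (ι := Unit) measurable_const (hφ.comp measurable_snd)).comp
    (measurable_id.prodMk (measurable_const (a := ())))

theorem measurable_duhamel_integrand (lam t : ℝ) {φ : ℝ × Rd d → ℝ} (hφ : Measurable φ) :
    Measurable fun p : Rd d × ℝ =>
      exp (-lam * (t - p.2)) * heatConv d (t - p.2) (fun y => φ (p.2, y)) p.1 :=
  (Measurable.exp (by fun_prop)).mul (measurable_heatConv (by fun_prop) hφ)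

theorem eLpNorm_duhamel_integral_le (lam : ℝ) {t : ℝ} {φ : ℝ × Rd d → ℝ} (hφ : Measurable φ) :
    eLpNorm (fun x => ∫ τ in Ioo 0 t,
        exp (-lam * (t - τ)) * heatConv d (t - τ) (fun y => φ (τ, y)) x) 2 volume
      ≤ ∫⁻ τ in Ioo 0 t,
          ENNReal.ofReal (exp (-lam * (t - τ))) * eLpNorm (fun y => φ (τ, y)) 2 volume := by
  refine (eLpNorm_two_integral_le (measurable_duhamel_integrand lam t hφ).stronglyMeasurable).trans
    (setLIntegral_mono' measurableSet_Ioo fun τ hτ => ?_)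
  rw [show (fun x => exp (-lam * (t - τ)) * heatConv d (t - τ) (fun y => φ (τ, y)) x)
      = exp (-lam * (t - τ)) • heatConv d (t - τ) (fun y => φ (τ, y)) from rfl,
    eLpNorm_const_smul, enorm_eq_ofReal (exp_nonneg _)]
  gcongr
  exact eLpNorm_heatConv_le (sub_nonneg.2 hτ.2.le) (hφ.comp measurable_prodMk_left)

end HeatSemigroup

theorem measurable_uncurry_comp_simpleFunc {α ι : Type*} [MeasurableSpace α] [MeasurableSpace ι]
    [MeasurableSingletonClass ι] {u : ι → α → ℝ} (hu : ∀ i, Measurable (u i))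
    (s : SimpleFunc ι ι) : Measurable fun p : ι × α => u (s p.1) p.2 := by
  have hrange : Measurable fun q : s.range × α => u q.1 q.2 := by
    rw [← measurable_swap_iff]
    exact measurable_from_prod_countable_left fun i => hu i
  exact hrange.comp (f := fun p : ι × α => (⟨s p.1, s.mem_range_self p.1⟩, p.2))
    ((s.measurable.comp measurable_fst).subtype_mk.prodMk measurable_snd)

/-- Sample `u` along simple-function approximations of the identity of `ι`: the samples are jointly
measurable, and `L^∞` continuity makes them converge to `u i` almost everywhere. -/
theorem exists_measurable_uncurry_ae_eq {α ι : Type*} [MeasurableSpace α] {μ : Measure α}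
    [TopologicalSpace ι] [MetrizableSpace ι] [SecondCountableTopology ι] [MeasurableSpace ι]
    [OpensMeasurableSpace ι] {u : ι → α → ℝ} (hu : ∀ i, Measurable (u i))
    (hcont : ∀ i, Tendsto (fun j => eLpNorm (fun x => u j x - u i x) ⊤ μ) (𝓝 i) (𝓝 0)) :
    ∃ F : ι × α → ℝ, Measurable F ∧ ∀ i, (fun x => F (i, x)) =ᵐ[μ] u i := by
  let s := (stronglyMeasurable_id (α := ι)).approx
  refine ⟨fun p => limUnder atTop fun n => u (s n p.1) p.2,
    (StronglyMeasurable.limUnder fun n =>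
      (measurable_uncurry_comp_simpleFunc hu (s n)).stronglyMeasurable).measurable, fun i => ?_⟩
  have hbound : ∀ᵐ x ∂μ, ∀ n, ‖u (s n i) x - u i x‖ₑ
      ≤ eLpNorm (fun x => u (s n i) x - u i x) ⊤ μ :=
    ae_all_iff.2 fun n => by rw [eLpNorm_exponent_top]; exact ae_le_eLpNormEssSup
  filter_upwards [hbound] with x hx
  refine Tendsto.limUnder_eq (tendsto_iff_edist_tendsto_0.2 ?_)
  simp only [edist_eq_enorm_sub]
  exact tendsto_of_tendsto_of_tendsto_of_le_of_le tendsto_const_nhds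
    ((hcont i).comp (stronglyMeasurable_id.tendsto_approx i)) (fun n => zero_le) hx

theorem ContinuousIntoLp.exists_measurable_ae_eq {d : ℕ} {b : ℝ} (hb : 0 ≤ b)
    {f : Rd d → ℝ → ℝ} (hmeas : ∀ t ∈ Icc 0 b, Measurable fun x => f x t)
    (hcont : ContinuousIntoLp d ⊤ (Icc 0 b) f) :
    ∃ F : ℝ × Rd d → ℝ, Measurable F ∧
      ∀ t ∈ Icc 0 b, (fun x => F (t, x)) =ᵐ[volume] fun x => f x t := by
  have hproj : ∀ τ, Tendsto (fun σ => (projIcc 0 b hb σ : ℝ)) (𝓝 τ)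
      (𝓝[Icc 0 b] (projIcc 0 b hb τ : ℝ)) := fun τ =>
    tendsto_nhdsWithin_iff.2 ⟨(continuous_subtype_val.comp continuous_projIcc).tendsto τ,
      Eventually.of_forall fun σ => (projIcc 0 b hb σ).2⟩
  obtain ⟨F, hF, hFae⟩ := exists_measurable_uncurry_ae_eq
    (u := fun τ x => f x (projIcc 0 b hb τ)) (fun τ => hmeas _ (projIcc 0 b hb τ).2)
    (fun τ => (hcont _ (projIcc 0 b hb τ).2).comp (hproj τ))
  exact ⟨F, hF, fun t ht => by simpa [projIcc_of_mem hb ht] using hFae t⟩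

theorem dist_toReal_eLpNorm_le {α E : Type*} [MeasurableSpace α] {μ : Measure α}
    [NormedAddCommGroup E] {p : ℝ≥0∞} [Fact (1 ≤ p)] {f g : α → E}
    (hf : MemLp f p μ) (hg : MemLp g p μ) :
    dist (eLpNorm f p μ).toReal (eLpNorm g p μ).toReal ≤ (eLpNorm (f - g) p μ).toReal := by
  rw [← Lp.norm_toLp f hf, ← Lp.norm_toLp g hg, ← Lp.edist_toLp_toLp f g hf hg, ← dist_edist]
  exact (dist_norm_norm_le _ _).trans_eq (dist_eq_norm _ _).symm

theorem ContinuousIntoLp.continuousOn_toReal_eLpNorm {d : ℕ} {p : ℝ≥0∞} [Fact (1 ≤ p)]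
    {I : Set ℝ} {T : Rd d → ℝ → ℝ} (hT : ∀ t ∈ I, MemLp (fun x => T x t) p volume)
    (hcont : ContinuousIntoLp d p I T) :
    ContinuousOn (fun t => (eLpNorm (fun x => T x t) p volume).toReal) I := by
  intro t₀ ht₀
  rw [ContinuousWithinAt, tendsto_iff_dist_tendsto_zero]
  refine squeeze_zero' (g := fun t => (eLpNorm (fun x => T x t - T x t₀) p volume).toReal)
    (Eventually.of_forall fun t => dist_nonneg) ?_ ?_
  · filter_upwards [self_mem_nhdsWithin] with t ht using
      dist_toReal_eLpNorm_le (hT t ht) (hT t₀ ht₀)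
  · simpa [Function.comp_def] using (ENNReal.tendsto_toReal zero_ne_top).comp (hcont t₀ ht₀)

theorem le_mul_exp_of_le_add_integral {v : ℝ → ℝ} {A M b : ℝ} (hM : 0 ≤ M)
    (hv : ContinuousOn v (Icc 0 b)) (hle : ∀ s ∈ Icc 0 b, v s ≤ A + ∫ τ in 0..s, M * v τ) :
    ∀ s ∈ Icc 0 b, v s ≤ A * exp (M * s) := by
  intro s hs
  have hb : 0 ≤ b := hs.1.trans hs.2
  -- extend `M v` continuously to `ℝ`, so that its primitive is differentiable everywhere
  set w := fun σ => M * v (projIcc 0 b hb σ)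
  have hw : Continuous w := continuous_const.mul <|
    hv.comp_continuous (continuous_subtype_val.comp continuous_projIcc)
      fun σ => (projIcc 0 b hb σ).2
  have hvw : ∀ σ ∈ Icc 0 b, ∫ τ in 0..σ, M * v τ = ∫ τ in 0..σ, w τ := fun σ hσ =>
    intervalIntegral.integral_congr fun τ hτ => by
      rw [uIcc_of_le hσ.1] at hτ
      simp only [w, projIcc_of_mem hb ⟨hτ.1, hτ.2.trans hσ.2⟩]
  set Φ := fun σ => A + ∫ τ in 0..σ, w τ
  have hΦ : ∀ σ, HasDerivAt Φ (w σ) σ := fun σ =>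
    (intervalIntegral.integral_hasDerivAt_right (hw.intervalIntegrable _ _)
      (hw.stronglyMeasurableAtFilter _ _) hw.continuousAt).const_add A
  have hvΦ : ∀ σ ∈ Icc 0 b, v σ ≤ Φ σ := fun σ hσ => (hle σ hσ).trans_eq (by rw [hvw σ hσ])
  have hgronwall := le_gronwallBound_of_liminf_deriv_right_le (f := Φ) (δ := A) (ε := 0)
    (fun σ _ => (hΦ σ).continuousAt.continuousWithinAt)
    (fun σ _ r hr => (hΦ σ).hasDerivWithinAt.liminf_right_slope_le hr) (by simp [Φ])
    (fun σ hσ => by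
      simpa [w, projIcc_of_mem hb (Ico_subset_Icc_self hσ)] using
        mul_le_mul_of_nonneg_left (hvΦ σ (Ico_subset_Icc_self hσ)) hM) s hs
  rw [sub_zero, gronwallBound_ε0] at hgronwall
  exact (hvΦ s hs).trans hgronwall

theorem le_mul_exp_sub_of_le_exp_mul_add_integral {u : ℝ → ℝ} {A M lam b : ℝ} (hM : 0 ≤ M)
    (hu : ContinuousOn u (Icc 0 b))
    (hle : ∀ t ∈ Icc 0 b,
      u t ≤ exp (-lam * t) * A + ∫ τ in 0..t, exp (-lam * (t - τ)) * (M * u τ)) :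
    ∀ t ∈ Icc 0 b, u t ≤ A * exp ((M - lam) * t) := by
  have hv := le_mul_exp_of_le_add_integral (v := fun t => exp (lam * t) * u t) hM
    ((Continuous.continuousOn (by fun_prop)).mul hu) fun s hs => by
      calc exp (lam * s) * u s
          ≤ exp (lam * s) * (exp (-lam * s) * A
              + ∫ τ in 0..s, exp (-lam * (s - τ)) * (M * u τ)) :=
            mul_le_mul_of_nonneg_left (hle s hs) (exp_nonneg _)
        _ = A + ∫ τ in 0..s, M * (exp (lam * τ) * u τ) := by
            rw [mul_add, ← mul_assoc, ← exp_add, ← intervalIntegral.integral_const_mul]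
            congr 1
            · simp
            · congr 1
              ext τ
              rw [show lam * τ = lam * s + -lam * (s - τ) by ring, exp_add]
              ring
  intro t ht
  calc u t = exp (-lam * t) * (exp (lam * t) * u t) := by
        rw [← mul_assoc, ← exp_add, neg_mul, neg_add_cancel, exp_zero, one_mul]
    _ ≤ exp (-lam * t) * (A * exp (M * t)) :=
        mul_le_mul_of_nonneg_left (hv t ht) (exp_nonneg _)
    _ = A * exp ((M - lam) * t) := by
        rw [mul_left_comm, ← exp_add]
        ring_nf

theorem rrate_nonneg (s : ℝ) : 0 ≤ rrate s := by
  unfold rrate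
  split_ifs <;> positivity

theorem rrate_le_abs (s : ℝ) : rrate s ≤ |s| := by
  unfold rrate
  split_ifs with hs
  · rw [abs_of_pos hs, neg_div, exp_neg, inv_le_comm₀ (exp_pos _) hs]
    linarith [add_one_le_exp (1 / s), one_div s]
  · exact abs_nonneg s

theorem measurable_rrate : Measurable rrate :=
  Measurable.ite (measurableSet_lt measurable_const measurable_id)
    (measurable_const.div measurable_id).exp measurable_const

namespace IsMildSolutionOn

variable {d : ℕ} {lam beta b : ℝ} {I : Set ℝ} {T0 Y0 : Rd d → ℝ} {T Y : Rd d → ℝ → ℝ}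

theorem fuel_nonneg_le (sol : IsMildSolutionOn d lam beta I T0 Y0 T Y) (hbeta : 0 ≤ beta)
    (hY0 : ∀ x, 0 ≤ Y0 x) {t : ℝ} (ht : t ∈ I) (x : Rd d) : 0 ≤ Y x t ∧ Y x t ≤ Y0 x := by
  have hburnt : 0 ≤ ∫ σ in Ioc 0 t, rrate (T x σ) := integral_nonneg fun σ => rrate_nonneg _
  rw [sol.fuel x t ht]
  refine ⟨mul_nonneg (hY0 x) (exp_nonneg _), mul_le_of_le_one_right (hY0 x) ?_⟩
  exact exp_le_one_iff.2 (by nlinarith)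

theorem eLpNorm_reaction_le (sol : IsMildSolutionOn d lam beta I T0 Y0 T Y) (hbeta : 0 ≤ beta)
    (hY0 : ∀ x, 0 ≤ Y0 x) {t : ℝ} (ht : t ∈ I) (p : ℝ≥0∞) :
    eLpNorm (fun x => Y x t * rrate (T x t)) p volume
      ≤ eLpNorm Y0 ⊤ volume * eLpNorm (fun x => T x t) p volume := by
  refine le_trans (eLpNorm_mono fun x => ?_)
    (eLpNorm_smul_le_eLpNorm_top_mul_eLpNorm p (sol.meas_T t ht).aestronglyMeasurable Y0)
  obtain ⟨hY, hYY0⟩ := sol.fuel_nonneg_le hbeta hY0 ht x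
  simp only [smul_eq_mul, Pi.mul_apply, norm_mul, Real.norm_eq_abs, abs_of_nonneg hY,
    abs_of_nonneg (hY0 x), abs_of_nonneg (rrate_nonneg _)]
  exact mul_le_mul hYY0 (rrate_le_abs _) (rrate_nonneg _) (hY0 x)

theorem exists_measurable_reaction (sol : IsMildSolutionOn d lam beta (Icc 0 b) T0 Y0 T Y)
    (hb : 0 ≤ b) : ∃ φ : ℝ × Rd d → ℝ, Measurable φ ∧
      ∀ τ ∈ Icc 0 b, (fun y => φ (τ, y)) =ᵐ[volume] fun y => Y y τ * rrate (T y τ) := by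
  obtain ⟨T', hT', hT'ae⟩ := sol.cont_T.exists_measurable_ae_eq hb sol.meas_T
  obtain ⟨Y', hY', hY'ae⟩ := sol.cont_Y.exists_measurable_ae_eq hb sol.meas_Y
  refine ⟨fun p => Y' p * rrate (T' p), hY'.mul (measurable_rrate.comp hT'), fun τ hτ => ?_⟩
  filter_upwards [hT'ae τ hτ, hY'ae τ hτ] with y hTy hYy
  rw [hTy, hYy]

theorem eLpNorm_le_duhamel (sol : IsMildSolutionOn d lam beta (Icc 0 b) T0 Y0 T Y)
    (hbeta : 0 ≤ beta) (hY0 : ∀ x, 0 ≤ Y0 x) {t : ℝ} (ht : t ∈ Icc 0 b) :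
    eLpNorm (fun x => T x t) 2 volume
      ≤ ENNReal.ofReal (exp (-lam * t)) * eLpNorm T0 2 volume
        + ∫⁻ τ in Ioo 0 t, ENNReal.ofReal (exp (-lam * (t - τ)))
            * (eLpNorm Y0 ⊤ volume * eLpNorm (fun x => T x τ) 2 volume) := by
  obtain ⟨φ, hφ, hφae⟩ := sol.exists_measurable_reaction (ht.1.trans ht.2)
  have hIoo : ∀ τ ∈ Ioo 0 t, τ ∈ Icc 0 b := fun τ hτ => ⟨hτ.1.le, hτ.2.le.trans ht.2⟩
  -- `heatConv d 0` is the identity, so the integrands may differ at the null point `τ = t`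
  have hsource : ∀ x, ∫ τ in Ioc 0 t,
      exp (-lam * (t - τ)) * heatConv d (t - τ) (fun y => Y y τ * rrate (T y τ)) x
      = ∫ τ in Ioo 0 t, exp (-lam * (t - τ)) * heatConv d (t - τ) (fun y => φ (τ, y)) x :=
    fun x => by
      rw [integral_Ioc_eq_integral_Ioo]
      refine setIntegral_congr_fun measurableSet_Ioo fun τ hτ => ?_
      rw [heatConv_congr_ae (sub_ne_zero.2 hτ.2.ne') (hφae τ (hIoo τ hτ))]
  have hrep : duhamelRep d lam T0 T Y t = exp (-lam * t) • heatConv d t T0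
      + fun x => ∫ τ in Ioo 0 t,
          exp (-lam * (t - τ)) * heatConv d (t - τ) (fun y => φ (τ, y)) x := by
    ext x
    simp only [duhamelRep, hsource, Pi.add_apply, Pi.smul_apply, smul_eq_mul]
  have hreaction : ∀ τ ∈ Ioo 0 t, eLpNorm (fun y => φ (τ, y)) 2 volume
      ≤ eLpNorm Y0 ⊤ volume * eLpNorm (fun x => T x τ) 2 volume := fun τ hτ =>
    (eLpNorm_congr_ae (hφae τ (hIoo τ hτ))).trans_le
      (sol.eLpNorm_reaction_le hbeta hY0 (hIoo τ hτ) 2)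
  rw [eLpNorm_congr_ae (sol.duhamel t ht), hrep]
  refine (eLpNorm_add_le ?_ ?_ one_le_two).trans (add_le_add ?_ ?_)
  · exact ((sol.meas_T0.heatConv t).const_smul _).aestronglyMeasurable
  · exact (measurable_duhamel_integrand lam t hφ).stronglyMeasurable.integral_prod_right'
      |>.aestronglyMeasurable
  · rw [eLpNorm_const_smul, enorm_eq_ofReal (exp_nonneg _)]
    gcongr
    exact eLpNorm_heatConv_le ht.1 sol.meas_T0
  · refine (eLpNorm_duhamel_integral_le lam hφ).trans
      (setLIntegral_mono' measurableSet_Ioo fun τ hτ => ?_)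
    gcongr
    exact hreaction τ hτ

theorem toReal_eLpNorm_le_duhamel (sol : IsMildSolutionOn d lam beta (Icc 0 b) T0 Y0 T Y)
    (hbeta : 0 ≤ beta) (hY0 : ∀ x, 0 ≤ Y0 x) (hT0 : MemLp T0 2 volume)
    (hT : ∀ t ∈ Icc 0 b, MemLp (fun x => T x t) 2 volume) (hcont : ContinuousIntoLp d 2 (Icc 0 b) T)
    {t : ℝ} (ht : t ∈ Icc 0 b) :
    (eLpNorm (fun x => T x t) 2 volume).toReal
      ≤ exp (-lam * t) * (eLpNorm T0 2 volume).toReal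
        + ∫ τ in 0..t, exp (-lam * (t - τ))
            * ((eLpNorm Y0 ⊤ volume).toReal * (eLpNorm (fun x => T x τ) 2 volume).toReal) := by
  have hIoo : ∀ τ ∈ Ioo 0 t, τ ∈ Icc 0 b := fun τ hτ => ⟨hτ.1.le, hτ.2.le.trans ht.2⟩
  have hint : IntegrableOn (fun τ => exp (-lam * (t - τ))
      * ((eLpNorm Y0 ⊤ volume).toReal * (eLpNorm (fun x => T x τ) 2 volume).toReal)) (Ioo 0 t) :=
    ((Continuous.continuousOn (by fun_prop)).mul (continuousOn_const.mul
      ((hcont.continuousOn_toReal_eLpNorm hT).mono (Icc_subset_Icc le_rfl ht.2)))).integrableOn_Icc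
      |>.mono_set Ioo_subset_Icc_self
  have hlintegral : ∫⁻ τ in Ioo 0 t, ENNReal.ofReal (exp (-lam * (t - τ)))
        * (eLpNorm Y0 ⊤ volume * eLpNorm (fun x => T x τ) 2 volume)
      = ENNReal.ofReal (∫ τ in Ioo 0 t, exp (-lam * (t - τ))
          * ((eLpNorm Y0 ⊤ volume).toReal * (eLpNorm (fun x => T x τ) 2 volume).toReal)) := by
    rw [ofReal_integral_eq_lintegral_ofReal hint (Eventually.of_forall fun τ => by positivity)]
    refine setLIntegral_congr_fun measurableSet_Ioo fun τ hτ => ?_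
    rw [ofReal_mul (exp_nonneg _), ofReal_mul toReal_nonneg, ofReal_toReal sol.bdd_Y0.ne,
      ofReal_toReal (hT τ (hIoo τ hτ)).2.ne]
  have h := sol.eLpNorm_le_duhamel hbeta hY0 ht
  rw [hlintegral, ← ofReal_toReal hT0.2.ne, ← ofReal_mul (exp_nonneg _),
    ← ofReal_add (by positivity) (setIntegral_nonneg measurableSet_Ioo fun τ _ => by positivity)]
    at h
  rw [intervalIntegral.integral_of_le ht.1, integral_Ioc_eq_integral_Ioo]
  exact toReal_le_of_le_ofReal (by positivity) h

end IsMildSolutionOn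

/-- Grönwall-type estimate: there is an absolute constant `C ≥ 1` such
that for any `λ > 0` and any mild solution with `T₀ ∈ L² ∩ L^∞`, `Y₀ ∈ L^∞`, `Y₀ ≥ 0`,
and `T(·,t) ∈ L² ∩ L^∞` continuously in time,
`‖T(·,t)‖_{L²}² ≤ C ‖T₀‖_{L²}² exp((C ‖Y₀‖_{L^∞} - λ) t)` for all `t ∈ [0,t*]`. -/
theorem temperature_l2_gronwall_estimate :
    ∃ C : ℝ, 1 ≤ C ∧
      ∀ (d : ℕ), 1 ≤ d → ∀ (lam beta : ℝ), 0 < lam → 0 ≤ beta →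
      ∀ (tstar : ℝ), 0 < tstar →
      ∀ (T0 Y0 : Rd d → ℝ) (T Y : Rd d → ℝ → ℝ),
        (∀ x, 0 ≤ Y0 x) →
        MeasureTheory.MemLp T0 2 volume →
        IsMildSolutionOn d lam beta (Set.Icc 0 tstar) T0 Y0 T Y →
        (∀ t ∈ Set.Icc (0 : ℝ) tstar, MeasureTheory.MemLp (fun x => T x t) 2 volume) →
        ContinuousIntoLp d 2 (Set.Icc 0 tstar) T →
        ∀ t ∈ Set.Icc (0 : ℝ) tstar,
          (eLpNorm (fun x => T x t) 2 volume) ^ 2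
            ≤ ENNReal.ofReal C * (eLpNorm T0 2 volume) ^ 2
              * ENNReal.ofReal
                  (Real.exp ((C * (eLpNorm Y0 ⊤ volume).toReal - lam) * t)) := by
  refine ⟨2, one_le_two, ?_⟩
  intro d _ lam beta hlam hbeta tstar _ T0 Y0 T Y hY0 hT0 sol hT hcont t ht
  set A := (eLpNorm T0 2 volume).toReal
  set M := (eLpNorm Y0 ⊤ volume).toReal
  have hdecay : (eLpNorm (fun x => T x t) 2 volume).toReal ≤ A * exp ((M - lam) * t) :=
    le_mul_exp_sub_of_le_exp_mul_add_integral toReal_nonneg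
      (hcont.continuousOn_toReal_eLpNorm hT)
      (fun s hs => sol.toReal_eLpNorm_le_duhamel hbeta hY0 hT0 hT hcont hs) t ht
  have hexp : exp ((M - lam) * t) ^ 2 ≤ exp ((2 * M - lam) * t) := by
    rw [← exp_nat_mul, exp_le_exp]
    push_cast
    nlinarith [mul_nonneg hlam.le ht.1]
  rw [← ofReal_toReal (hT t ht).2.ne, ← ofReal_toReal hT0.2.ne, ← ofReal_pow toReal_nonneg,
    ← ofReal_pow toReal_nonneg, ← ofReal_mul zero_le_two, ← ofReal_mul (by positivity)]
  refine ofReal_le_ofReal ?_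
  calc (eLpNorm (fun x => T x t) 2 volume).toReal ^ 2
      ≤ A ^ 2 * exp ((M - lam) * t) ^ 2 := by rw [← mul_pow]; gcongr
    _ ≤ 2 * A ^ 2 * exp ((2 * M - lam) * t) := by gcongr; linarith [sq_nonneg A]
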